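/- Each of the following four vectors lies in Γ^∨, satisfies ⟨K, ρ⟩ = −2, and admits the indicated representation as a nonnegative integer combination of elements of 𝒜 (hence lies in cone(𝒜)): ρ₁ := 3e_L + Σ_{{a,b}⊂{1,…,5}} e_{ab} = A_{15} + A_{13} + A_{35} + 2B_{246}; ρ₂ := e_L + e_5 = A_{34;5} + B_{126}; ρ₃ := 2e_L + e_{14} + e_{15} + e_{24} + e_{25} + e_{34} + e_{35} = A_{15} + A_{14} + 2B_{236}; ρ₄ := e_L + e_{25} + e_{34} = A_{25} + B_{146} + B_{136}. (These are the anticanonical-degree-2 representatives of the 𝔖₆-orbits of coextremal rays of M̄_{0,6}.) -/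

import Mathlib

noncomputable section

/-- Index in `Fin 16` of the exceptional class `E_{ab}` attached to a pair of points
(points written `0`-based as elements of `Fin 5`, assuming `a < b`):
`(0,1) ↦ 6, (0,2) ↦ 7, …, (3,4) ↦ 15`. -/
def pairIdx : ℕ → ℕ → Fin 16
  | 0, 1 => 6
  | 0, 2 => 7
  | 0, 3 => 8
  | 0, 4 => 9
  | 1, 2 => 10
  | 1, 3 => 11
  | 1, 4 => 12
  | 2, 3 => 13
  | 2, 4 => 14
  | 3, 4 => 15
  | _, _ => 0

/-- The coordinate vector `e_L` (the class `L`). -/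
def eL : Fin 16 → ℝ := Pi.single 0 1

/-- The coordinate vector `e_i` for the point `i ∈ {1,…,5}` (represented `0`-based
by `i : Fin 5`). -/
def eP (i : Fin 5) : Fin 16 → ℝ := Pi.single ⟨i.val + 1, by omega⟩ 1

/-- The coordinate vector `e_{ab}` for a 2-element subset `{a,b} ⊂ {1,…,5}`
(represented `0`-based); symmetric in `a` and `b`. -/
def eE (a b : Fin 5) : Fin 16 → ℝ :=
  Pi.single (if a.val < b.val then pairIdx a.val b.val else pairIdx b.val a.val) 1

/-- The standard inner product on `ℝ¹⁶`. -/
def ip (x y : Fin 16 → ℝ) : ℝ := ∑ i, x i * y i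

def Distinct3 (k l m : Fin 5) : Prop := k ≠ l ∧ k ≠ m ∧ l ≠ m

def Distinct5 (i j k l m : Fin 5) : Prop :=
  i ≠ j ∧ i ≠ k ∧ i ≠ l ∧ i ≠ m ∧ j ≠ k ∧ j ≠ l ∧ j ≠ m ∧ k ≠ l ∧ k ≠ m ∧ l ≠ m

/-- The 40 classes: 25 boundary divisors and 15 fixed-point divisors `F_σ` of `M̄₀₆`. -/
def Gamma : Set (Fin 16 → ℝ) :=
  {v | (∃ i : Fin 5, v = eP i) ∨
       (∃ a b : Fin 5, a ≠ b ∧ v = eE a b) ∨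
       (∃ k l m : Fin 5, Distinct3 k l m ∧
          v = eL - eP k - eP l - eP m - eE k l - eE k m - eE l m) ∨
       (∃ j a b c d : Fin 5, Distinct5 j a b c d ∧
          v = (2 : ℝ) • eL - (∑ i, eP i) - eE a c - eE a d - eE b c - eE b d)}

/-- The dual cone `Γ^∨ = {v : ⟨g,v⟩ ≥ 0 for all g ∈ Γ}`. -/
def GammaDual : Set (Fin 16 → ℝ) := {v | ∀ gv ∈ Gamma, 0 ≤ ip gv v}
/-- `B_{ab6} = -e_{ab}` for a pair `{a,b} ⊂ {1,…,5}`. -/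
def B6 (a b : Fin 5) : Fin 16 → ℝ := -(eE a b)

/-- `B_{ijk} = e_L + e_a + e_b - e_{ab}` for a 3-element `{i,j,k} ⊂ {1,…,5}`
with complement `{a,b}`. -/
def Bv (i j k a b : Fin 5) : Fin 16 → ℝ := eL + eP a + eP b - eE a b

/-- `A_{ij} = e_L + e_{ij} + e_{kl} + e_{km} + e_{lm}` for a pair `{i,j} ⊂ {1,…,5}`
with complement `{k,l,m}`. -/
def A2 (i j k l m : Fin 5) : Fin 16 → ℝ := eL + eE i j + eE k l + eE k m + eE l m

/-- `A_{i6} = -2e_i + Σ_{j≠i} e_{ij}`. -/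
def A6 (i : Fin 5) : Fin 16 → ℝ :=
  -((2 : ℝ) • eP i) + ∑ j, if j ≠ i then eE i j else 0

/-- `A_{ij;k} = e_L + e_k + e_{ab}` for distinct `i,j,k ∈ {1,…,5}`
with `{a,b}` the complement of `{i,j,k}`. -/
def A3 (i j k a b : Fin 5) : Fin 16 → ℝ := eL + eP k + eE a b

/-- `A_{ij;6} = 2e_L + e_k + e_l + e_m + e_{ij}` for a pair `{i,j} ⊂ {1,…,5}`
with complement `{k,l,m}`. -/
def A36 (i j k l m : Fin 5) : Fin 16 → ℝ := (2 : ℝ) • eL + eP k + eP l + eP m + eE i j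

/-- `A_{i6;k} = -e_i + e_{ik}` for distinct `i,k ∈ {1,…,5}`. -/
def A63 (i k : Fin 5) : Fin 16 → ℝ := -(eP i) + eE i k

/-- The set `𝒜` of 95 vectors: pushforwards of the generators of the nef curve cones
of the boundary divisors of `M̄₀₆`. -/
def Aset : Set (Fin 16 → ℝ) :=
  {v | (∃ a b, a ≠ b ∧ v = B6 a b) ∨
       (∃ i j k a b, Distinct5 i j k a b ∧ v = Bv i j k a b) ∨
       (∃ i j k l m, Distinct5 i j k l m ∧ v = A2 i j k l m) ∨
       (∃ i, v = A6 i) ∨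
       (∃ i j k a b, Distinct5 i j k a b ∧ v = A3 i j k a b) ∨
       (∃ i j k l m, Distinct5 i j k l m ∧ v = A36 i j k l m) ∨
       (∃ i k, i ≠ k ∧ v = A63 i k)}

/-- The convex cone generated by a set: all finite nonnegative combinations. -/
def coneGen (S : Set (Fin 16 → ℝ)) : Set (Fin 16 → ℝ) :=
  {v | ∃ (n : ℕ) (c : Fin n → ℝ) (x : Fin n → (Fin 16 → ℝ)),
      (∀ t, 0 ≤ c t) ∧ (∀ t, x t ∈ S) ∧ v = ∑ t, c t • x t}
/-- The canonical class `K = -4e_L + 2(e_1 + ⋯ + e_5) + Σ_{{a,b}} e_{ab}` of `M̄₀₆`. -/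
def Kcl : Fin 16 → ℝ :=
  -((4 : ℝ) • eL) + (2 : ℝ) • (∑ i, eP i) +
    ∑ a : Fin 5, ∑ b : Fin 5, if a < b then eE a b else 0
/-- `ρ₁ = 3e_L + Σ_{{a,b}} e_{ab}`. -/
def ρ₁ : Fin 16 → ℝ :=
  (3 : ℝ) • eL + ∑ a : Fin 5, ∑ b : Fin 5, if a < b then eE a b else 0

/-- `ρ₂ = e_L + e₅`. -/
def ρ₂ : Fin 16 → ℝ := eL + eP 4

/-- `ρ₃ = 2e_L + e₁₄ + e₁₅ + e₂₄ + e₂₅ + e₃₄ + e₃₅`. -/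
def ρ₃ : Fin 16 → ℝ :=
  (2 : ℝ) • eL + eE 0 3 + eE 0 4 + eE 1 3 + eE 1 4 + eE 2 3 + eE 2 4

/-- `ρ₄ = e_L + e₂₅ + e₃₄`. -/
def ρ₄ : Fin 16 → ℝ := eL + eE 1 4 + eE 2 3

/-!
Every vector involved has integer coordinates in the basis `L, E_i, E_{ab}`, and pairing with a
basis vector reads off a coordinate. For a vector with nonnegative coordinates, membership in `Γ^∨`
therefore reduces to finitely many inequalities between natural numbers, one for each plane class
and each `F_σ`, which are checked exhaustively over `Fin 5`. The remaining claims are coordinatewise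
identities together with the closure of `cone(𝒜)` under sums and nonnegative scaling.
-/

def pointCoord (i : Fin 5) : Fin 16 := ⟨i.val + 1, by omega⟩

def pairCoord (a b : Fin 5) : Fin 16 :=
  if a.val < b.val then pairIdx a.val b.val else pairIdx b.val a.val

instance (k l m : Fin 5) : Decidable (Distinct3 k l m) :=
  inferInstanceAs (Decidable (_ ∧ _ ∧ _))

instance (i j k l m : Fin 5) : Decidable (Distinct5 i j k l m) :=
  inferInstanceAs (Decidable (_ ∧ _ ∧ _ ∧ _ ∧ _ ∧ _ ∧ _ ∧ _ ∧ _ ∧ _))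

theorem ip_eq_dotProduct (u v : Fin 16 → ℝ) : ip u v = u ⬝ᵥ v := rfl

section Pairing

variable (v : Fin 16 → ℝ)

theorem eL_dotProduct : eL ⬝ᵥ v = v 0 := by
  rw [eL, single_dotProduct, one_mul]

theorem eP_dotProduct (i : Fin 5) : eP i ⬝ᵥ v = v (pointCoord i) := by
  rw [eP, single_dotProduct, one_mul, pointCoord]

theorem eE_dotProduct (a b : Fin 5) : eE a b ⬝ᵥ v = v (pairCoord a b) := by
  rw [eE, single_dotProduct, one_mul, pairCoord]

theorem mem_GammaDual_of_coords
    (hpoint : ∀ i, 0 ≤ v (pointCoord i))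
    (hpair : ∀ a b, a ≠ b → 0 ≤ v (pairCoord a b))
    (hplane : ∀ k l m, Distinct3 k l m →
      v (pointCoord k) + v (pointCoord l) + v (pointCoord m) +
        v (pairCoord k l) + v (pairCoord k m) + v (pairCoord l m) ≤ v 0)
    (hquadric : ∀ j a b c d, Distinct5 j a b c d →
      ∑ i, v (pointCoord i) + v (pairCoord a c) + v (pairCoord a d) +
        v (pairCoord b c) + v (pairCoord b d) ≤ 2 * v 0) :
    v ∈ GammaDual := by
  rintro g (⟨i, rfl⟩ | ⟨a, b, hab, rfl⟩ | ⟨k, l, m, hklm, rfl⟩ | ⟨j, a, b, c, d, h, rfl⟩) <;>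
    simp only [ip_eq_dotProduct, sub_dotProduct, smul_dotProduct, sum_dotProduct,
      smul_eq_mul, eL_dotProduct, eP_dotProduct, eE_dotProduct]
  · exact hpoint i
  · exact hpair a b hab
  · linarith [hplane k l m hklm]
  · linarith [hquadric j a b c d h]

end Pairing

theorem natCast_mem_GammaDual (r : Fin 16 → ℕ)
    (hplane : ∀ k l m, Distinct3 k l m →
      r (pointCoord k) + r (pointCoord l) + r (pointCoord m) +
        r (pairCoord k l) + r (pairCoord k m) + r (pairCoord l m) ≤ r 0)
    (hquadric : ∀ j a b c d, Distinct5 j a b c d →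
      ∑ i, r (pointCoord i) + r (pairCoord a c) + r (pairCoord a d) +
        r (pairCoord b c) + r (pairCoord b d) ≤ 2 * r 0) :
    (fun j ↦ (r j : ℝ)) ∈ GammaDual :=
  mem_GammaDual_of_coords _ (fun _ ↦ Nat.cast_nonneg _) (fun _ _ _ ↦ Nat.cast_nonneg _)
    (fun k l m h ↦ by exact_mod_cast hplane k l m h)
    (fun j a b c d h ↦ by exact_mod_cast hquadric j a b c d h)

section Cone

variable {S : Set (Fin 16 → ℝ)} {x y : Fin 16 → ℝ}

theorem mem_coneGen_of_mem (hx : x ∈ S) : x ∈ coneGen S :=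
  ⟨1, fun _ ↦ 1, fun _ ↦ x, fun _ ↦ zero_le_one, fun _ ↦ hx, by simp⟩

theorem coneGen_add_mem (hx : x ∈ coneGen S) (hy : y ∈ coneGen S) : x + y ∈ coneGen S := by
  obtain ⟨n, c, u, hc, hu, rfl⟩ := hx
  obtain ⟨m, d, w, hd, hw, rfl⟩ := hy
  refine ⟨n + m, Fin.append c d, Fin.append u w, fun i ↦ ?_, fun i ↦ ?_, ?_⟩
  · cases i using Fin.addCases <;> simp [hc, hd]
  · cases i using Fin.addCases <;> simp [hu, hw]
  · simp [Fin.sum_univ_add]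

theorem coneGen_smul_mem {t : ℝ} (ht : 0 ≤ t) (hx : x ∈ coneGen S) : t • x ∈ coneGen S := by
  obtain ⟨n, c, u, hc, hu, rfl⟩ := hx
  exact ⟨n, t • c, u, fun i ↦ mul_nonneg ht (hc i), hu, by simp [Finset.smul_sum, smul_smul]⟩

end Cone

theorem B6_mem_Aset {a b : Fin 5} (h : a ≠ b) : B6 a b ∈ Aset :=
  Or.inl ⟨a, b, h, rfl⟩

theorem A2_mem_Aset {i j k l m : Fin 5} (h : Distinct5 i j k l m) : A2 i j k l m ∈ Aset :=
  Or.inr (Or.inr (Or.inl ⟨i, j, k, l, m, h, rfl⟩))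

theorem A3_mem_Aset {i j k a b : Fin 5} (h : Distinct5 i j k a b) : A3 i j k a b ∈ Aset :=
  Or.inr (Or.inr (Or.inr (Or.inr (Or.inl ⟨i, j, k, a, b, h, rfl⟩))))

theorem Kcl_eq_intCast :
    Kcl = fun j ↦ (((![-4, 2, 2, 2, 2, 2, 1, 1, 1, 1, 1, 1, 1, 1, 1, 1] : Fin 16 → ℤ) j : ℝ)) := by
  ext j; fin_cases j <;> simp [Kcl, eL, eP, eE, pairIdx, Fin.sum_univ_five]

theorem ρ₁_eq_natCast :
    ρ₁ = fun j ↦ (((![3, 0, 0, 0, 0, 0, 1, 1, 1, 1, 1, 1, 1, 1, 1, 1] : Fin 16 → ℕ) j : ℝ)) := by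
  ext j; fin_cases j <;> simp [ρ₁, eL, eE, pairIdx, Fin.sum_univ_five]

theorem ρ₂_eq_natCast :
    ρ₂ = fun j ↦ (((![1, 0, 0, 0, 0, 1, 0, 0, 0, 0, 0, 0, 0, 0, 0, 0] : Fin 16 → ℕ) j : ℝ)) := by
  ext j; fin_cases j <;> simp [ρ₂, eL, eP]

theorem ρ₃_eq_natCast :
    ρ₃ = fun j ↦ (((![2, 0, 0, 0, 0, 0, 0, 0, 1, 1, 0, 1, 1, 1, 1, 0] : Fin 16 → ℕ) j : ℝ)) := by
  ext j; fin_cases j <;> simp [ρ₃, eL, eE, pairIdx]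

theorem ρ₄_eq_natCast :
    ρ₄ = fun j ↦ (((![1, 0, 0, 0, 0, 0, 0, 0, 0, 0, 0, 0, 1, 1, 0, 0] : Fin 16 → ℕ) j : ℝ)) := by
  ext j; fin_cases j <;> simp [ρ₄, eL, eE, pairIdx]

theorem ρ₁_mem_GammaDual : ρ₁ ∈ GammaDual := by
  rw [ρ₁_eq_natCast]; exact natCast_mem_GammaDual _ (by decide) (by decide)

theorem ρ₂_mem_GammaDual : ρ₂ ∈ GammaDual := by
  rw [ρ₂_eq_natCast]; exact natCast_mem_GammaDual _ (by decide) (by decide)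

theorem ρ₃_mem_GammaDual : ρ₃ ∈ GammaDual := by
  rw [ρ₃_eq_natCast]; exact natCast_mem_GammaDual _ (by decide) (by decide)

theorem ρ₄_mem_GammaDual : ρ₄ ∈ GammaDual := by
  rw [ρ₄_eq_natCast]; exact natCast_mem_GammaDual _ (by decide) (by decide)

theorem ip_Kcl_ρ₁ : ip Kcl ρ₁ = -2 := by
  rw [Kcl_eq_intCast, ρ₁_eq_natCast]; norm_num [ip, Fin.sum_univ_succ]

theorem ip_Kcl_ρ₂ : ip Kcl ρ₂ = -2 := by
  rw [Kcl_eq_intCast, ρ₂_eq_natCast]; norm_num [ip, Fin.sum_univ_succ]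

theorem ip_Kcl_ρ₃ : ip Kcl ρ₃ = -2 := by
  rw [Kcl_eq_intCast, ρ₃_eq_natCast]; norm_num [ip, Fin.sum_univ_succ]

theorem ip_Kcl_ρ₄ : ip Kcl ρ₄ = -2 := by
  rw [Kcl_eq_intCast, ρ₄_eq_natCast]; norm_num [ip, Fin.sum_univ_succ]

theorem ρ₁_eq_sum : ρ₁ = A2 0 4 1 2 3 + A2 0 2 1 3 4 + A2 2 4 0 1 3 + (2 : ℝ) • B6 1 3 := by
  ext j; fin_cases j <;> simp [ρ₁, A2, B6, eL, eE, pairIdx, Fin.sum_univ_five] <;> norm_num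

theorem ρ₂_eq_sum : ρ₂ = A3 2 3 4 0 1 + B6 0 1 := by
  ext j; fin_cases j <;> simp [ρ₂, A3, B6, eL, eP, eE, pairIdx]

theorem ρ₃_eq_sum : ρ₃ = A2 0 4 1 2 3 + A2 0 3 1 2 4 + (2 : ℝ) • B6 1 2 := by
  ext j; fin_cases j <;> simp [ρ₃, A2, B6, eL, eE, pairIdx] <;> norm_num

theorem ρ₄_eq_sum : ρ₄ = A2 1 4 0 2 3 + B6 0 3 + B6 0 2 := by
  ext j; fin_cases j <;> simp [ρ₄, A2, B6, eL, eE, pairIdx]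

theorem ρ₁_mem_coneGen : ρ₁ ∈ coneGen Aset := by
  rw [ρ₁_eq_sum]
  exact coneGen_add_mem
    (coneGen_add_mem
      (coneGen_add_mem (mem_coneGen_of_mem (A2_mem_Aset (by decide)))
        (mem_coneGen_of_mem (A2_mem_Aset (by decide))))
      (mem_coneGen_of_mem (A2_mem_Aset (by decide))))
    (coneGen_smul_mem zero_le_two (mem_coneGen_of_mem (B6_mem_Aset (by decide))))

theorem ρ₂_mem_coneGen : ρ₂ ∈ coneGen Aset := by
  rw [ρ₂_eq_sum]
  exact coneGen_add_mem (mem_coneGen_of_mem (A3_mem_Aset (by decide)))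
    (mem_coneGen_of_mem (B6_mem_Aset (by decide)))

theorem ρ₃_mem_coneGen : ρ₃ ∈ coneGen Aset := by
  rw [ρ₃_eq_sum]
  exact coneGen_add_mem
    (coneGen_add_mem (mem_coneGen_of_mem (A2_mem_Aset (by decide)))
      (mem_coneGen_of_mem (A2_mem_Aset (by decide))))
    (coneGen_smul_mem zero_le_two (mem_coneGen_of_mem (B6_mem_Aset (by decide))))

theorem ρ₄_mem_coneGen : ρ₄ ∈ coneGen Aset := by
  rw [ρ₄_eq_sum]
  exact coneGen_add_mem
    (coneGen_add_mem (mem_coneGen_of_mem (A2_mem_Aset (by decide)))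
      (mem_coneGen_of_mem (B6_mem_Aset (by decide))))
    (mem_coneGen_of_mem (B6_mem_Aset (by decide)))

/-- Indices are `1`-based in the paper and `0`-based in `Fin 5` here. -/
theorem deg2_coextremal_decompositions :
    (ρ₁ ∈ GammaDual ∧ ip Kcl ρ₁ = -2 ∧
      ρ₁ = A2 0 4 1 2 3 + A2 0 2 1 3 4 + A2 2 4 0 1 3 + (2 : ℝ) • B6 1 3 ∧
      ρ₁ ∈ coneGen Aset) ∧
    (ρ₂ ∈ GammaDual ∧ ip Kcl ρ₂ = -2 ∧
      ρ₂ = A3 2 3 4 0 1 + B6 0 1 ∧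
      ρ₂ ∈ coneGen Aset) ∧
    (ρ₃ ∈ GammaDual ∧ ip Kcl ρ₃ = -2 ∧
      ρ₃ = A2 0 4 1 2 3 + A2 0 3 1 2 4 + (2 : ℝ) • B6 1 2 ∧
      ρ₃ ∈ coneGen Aset) ∧
    (ρ₄ ∈ GammaDual ∧ ip Kcl ρ₄ = -2 ∧
      ρ₄ = A2 1 4 0 2 3 + B6 0 3 + B6 0 2 ∧
      ρ₄ ∈ coneGen Aset) := by
  exact ⟨⟨ρ₁_mem_GammaDual, ip_Kcl_ρ₁, ρ₁_eq_sum, ρ₁_mem_coneGen⟩,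
    ⟨ρ₂_mem_GammaDual, ip_Kcl_ρ₂, ρ₂_eq_sum, ρ₂_mem_coneGen⟩,
    ⟨ρ₃_mem_GammaDual, ip_Kcl_ρ₃, ρ₃_eq_sum, ρ₃_mem_coneGen⟩,
    ⟨ρ₄_mem_GammaDual, ip_Kcl_ρ₄, ρ₄_eq_sum, ρ₄_mem_coneGen⟩⟩
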